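/- arXiv:0812.2573 — 7 statements merged into one kernel-verified Lean document; each statement's English description precedes it below -/
import Mathlib

section
/- Let V be a finite-dimensional complex inner product space, φ : V → V self-adjoint, and v ∈ V∖{0} a vector that is NOT an eigenvector of φ. Then the function t ↦ −(1/2)·⟨φ e^{tφ}v, e^{tφ}v⟩/⟨e^{tφ}v, e^{tφ}v⟩ is strictly decreasing on ℝ; equivalently, the Rayleigh quotient t ↦ ⟨φ e^{tφ}v, e^{tφ}v⟩/⟨e^{tφ}v, e^{tφ}v⟩ is strictly increasing along the flow. (The height function f([v]) = −(1/2)⟨φv,v⟩/⟨v,v⟩ is strictly decreasing along non-constant flow lines of the projective flow generated by φ.) -/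
/-!
Along a solution of `w' = T w` with `T` self-adjoint, the quotient rule gives
`d/dt ⟪T w, w⟫ / ‖w‖² = 2 (‖T w‖² ‖w‖² - ⟪T w, w⟫²) / ‖w‖⁴`, which is positive by the strict
Cauchy–Schwarz inequality as long as `w` is not an eigenvector. The curve `t ↦ e^{tφ} v` solves
this equation, and `e^{tφ}` is invertible and commutes with `φ`, so it maps non-eigenvectors to
non-eigenvectors.
-/

open scoped ComplexInnerProductSpace

open RCLike NormedSpace

section RayleighQuotient

variable {𝕜 E : Type*} [RCLike 𝕜] [NormedAddCommGroup E] [InnerProductSpace 𝕜 E]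

local notation "⟪" x ", " y "⟫" => inner 𝕜 x y

theorem norm_inner_lt_norm_mul_norm_of_not_exists_smul {w x : E} (hw : w ≠ 0)
    (h : ¬∃ r : 𝕜, x = r • w) : ‖⟪w, x⟫‖ < ‖w‖ * ‖x‖ := by
  refine (norm_inner_le_norm w x).lt_of_ne fun heq => h ?_
  have : w = 0 ∨ ∃ r : 𝕜, x = r • w := ((norm_inner_eq_norm_tfae 𝕜 w x).out 0 2).mp heq
  exact this.resolve_left hw

namespace ContinuousLinearMap

theorem sq_reApplyInnerSelf_lt (T : E →L[𝕜] E) {x : E} (hx : ¬∃ c : 𝕜, T x = c • x) :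
    T.reApplyInnerSelf x ^ 2 < ‖T x‖ ^ 2 * ‖x‖ ^ 2 := by
  have hx0 : x ≠ 0 := fun h => hx ⟨0, by simp [h]⟩
  calc T.reApplyInnerSelf x ^ 2 = |re ⟪x, T x⟫| ^ 2 := by
        rw [reApplyInnerSelf_apply, inner_re_symm, sq_abs]
    _ ≤ ‖⟪x, T x⟫‖ ^ 2 := by gcongr; exact abs_re_le_norm _
    _ < (‖x‖ * ‖T x‖) ^ 2 := by
        gcongr; exact norm_inner_lt_norm_mul_norm_of_not_exists_smul hx0 hx
    _ = ‖T x‖ ^ 2 * ‖x‖ ^ 2 := by ring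

variable [NormedSpace ℝ E] {T : E →L[𝕜] E} {w : ℝ → E} {t : ℝ}

theorem hasDerivAt_norm_sq_of_hasDerivAt_apply (hw : HasDerivAt w (T (w t)) t) :
    HasDerivAt (fun s => ‖w s‖ ^ 2) (2 * T.reApplyInnerSelf (w t)) t := by
  have h := (reCLM (K := 𝕜)).hasFDerivAt.comp_hasDerivAt t (hw.inner 𝕜 hw)
  simp only [Function.comp_def, reCLM_apply, inner_self_eq_norm_sq, map_add] at h
  refine h.congr_deriv ?_
  rw [reApplyInnerSelf_apply, inner_re_symm (w t)]
  ring

variable [IsScalarTower ℝ 𝕜 E]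

theorem hasDerivAt_reApplyInnerSelf (hT : (T : E →ₗ[𝕜] E).IsSymmetric)
    (hw : HasDerivAt w (T (w t)) t) :
    HasDerivAt (fun s => T.reApplyInnerSelf (w s)) (2 * ‖T (w t)‖ ^ 2) t := by
  have hTw : HasDerivAt (fun s => T (w s)) (T (T (w t))) t :=
    (T.restrictScalars ℝ).hasFDerivAt.comp_hasDerivAt t hw
  have hsymm : ⟪T (T (w t)), w t⟫ = ⟪T (w t), T (w t)⟫ := hT _ _
  refine ((reCLM (K := 𝕜)).hasFDerivAt.comp_hasDerivAt t (hTw.inner 𝕜 hw)).congr_deriv ?_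
  simp only [reCLM_apply, hsymm, map_add, inner_self_eq_norm_sq]
  ring

theorem hasDerivAt_rayleighQuotient (hT : (T : E →ₗ[𝕜] E).IsSymmetric)
    (hw : HasDerivAt w (T (w t)) t) (hw0 : w t ≠ 0) :
    HasDerivAt (fun s => T.rayleighQuotient (w s))
      (2 * (‖T (w t)‖ ^ 2 * ‖w t‖ ^ 2 - T.reApplyInnerSelf (w t) ^ 2) / (‖w t‖ ^ 2) ^ 2) t :=
  ((hasDerivAt_reApplyInnerSelf hT hw).div (hasDerivAt_norm_sq_of_hasDerivAt_apply hw)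
    (by positivity)).congr_deriv (by ring)

theorem strictMono_rayleighQuotient_of_hasDerivAt (hT : (T : E →ₗ[𝕜] E).IsSymmetric)
    (hw : ∀ t, HasDerivAt w (T (w t)) t) (hev : ∀ t, ¬∃ c : 𝕜, T (w t) = c • w t) :
    StrictMono fun t => T.rayleighQuotient (w t) := by
  have hw0 (t : ℝ) : w t ≠ 0 := fun h => hev t ⟨0, by simp [h]⟩
  refine strictMono_of_hasDerivAt_pos (fun t => hasDerivAt_rayleighQuotient hT (hw t) (hw0 t))
    fun t => div_pos ?_ (pow_pos (pow_pos (norm_pos_iff.2 (hw0 t)) 2) 2)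
  linarith [T.sq_reApplyInnerSelf_lt (hev t)]

end ContinuousLinearMap

end RayleighQuotient

namespace ContinuousLinearMap

section Exp

variable {V : Type*} [NormedAddCommGroup V] [NormedSpace ℂ V] [CompleteSpace V]

theorem hasDerivAt_exp_smul_apply (A : V →L[ℂ] V) (v : V) (t : ℝ) :
    HasDerivAt (fun s : ℝ => exp (s • A) v) (A (exp (t • A) v)) t :=
  ((apply ℂ V v).restrictScalars ℝ).hasFDerivAt.comp_hasDerivAt t
    (hasDerivAt_exp_smul_const' A t)

theorem injective_exp (B : V →L[ℂ] V) : Function.Injective (exp B : V →L[ℂ] V) := by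
  -- `isUnit_exp` would need a `NormedAlgebra ℚ` instance, which `V →L[ℂ] V` does not carry.
  obtain ⟨C, hC⟩ :=
    (isUnit_exp_of_mem_ball (𝕂 := ℂ) (x := B) (by simp [expSeries_radius_eq_top])).exists_left_inv
  intro x y h
  simpa [← mul_apply_eq_comp, hC] using congrArg C h

theorem apply_eq_smul_of_apply_exp_eq_smul {A B : V →L[ℂ] V} (hAB : Commute A B) {v : V}
    {c : ℂ} (h : A (exp B v) = c • exp B v) : A v = c • v := by
  apply B.injective_exp
  rw [← mul_apply_eq_comp, ← hAB.exp_right.eq]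
  simpa using h

end Exp

theorem strictMono_rayleighQuotient_exp_smul_apply {V : Type*}
    [NormedAddCommGroup V] [InnerProductSpace ℂ V] [CompleteSpace V] {A : V →L[ℂ] V}
    (hA : (A : V →ₗ[ℂ] V).IsSymmetric) {v : V} (hv : ¬∃ c : ℂ, A v = c • v) :
    StrictMono fun t : ℝ => A.rayleighQuotient (exp (t • A) v) :=
  strictMono_rayleighQuotient_of_hasDerivAt hA (A.hasDerivAt_exp_smul_apply v)
    fun t ⟨c, hc⟩ => hv ⟨c, apply_eq_smul_of_apply_exp_eq_smul ((Commute.refl A).smul_right t) hc⟩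

end ContinuousLinearMap

theorem height_strictAnti_along_flow_general
    {V : Type*} [NormedAddCommGroup V] [InnerProductSpace ℂ V] [FiniteDimensional ℂ V]
    (φ : V →ₗ[ℂ] V) (hφ : LinearMap.IsSymmetric φ) (v : V)
    (hev : ¬∃ c : ℂ, φ v = c • v) :
    StrictAnti (fun t : ℝ =>
      -(1 / 2) *
        Complex.re ⟪φ (NormedSpace.exp (t • LinearMap.toContinuousLinearMap φ) v),
            NormedSpace.exp (t • LinearMap.toContinuousLinearMap φ) v⟫ /
        Complex.re ⟪NormedSpace.exp (t • LinearMap.toContinuousLinearMap φ) v,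
            NormedSpace.exp (t • LinearMap.toContinuousLinearMap φ) v⟫) ∧
    StrictMono (fun t : ℝ =>
      Complex.re ⟪φ (NormedSpace.exp (t • LinearMap.toContinuousLinearMap φ) v),
          NormedSpace.exp (t • LinearMap.toContinuousLinearMap φ) v⟫ /
      Complex.re ⟪NormedSpace.exp (t • LinearMap.toContinuousLinearMap φ) v,
          NormedSpace.exp (t • LinearMap.toContinuousLinearMap φ) v⟫) := by
  set A := LinearMap.toContinuousLinearMap φ
  have hnorm (x : V) : Complex.re ⟪x, x⟫ = ‖x‖ ^ 2 := by
    rw [← re_to_complex, inner_self_eq_norm_sq]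
  have hmono := ContinuousLinearMap.strictMono_rayleighQuotient_exp_smul_apply (A := A) hφ hev
  simp only [ContinuousLinearMap.rayleighQuotient, ContinuousLinearMap.reApplyInnerSelf_apply,
    re_to_complex] at hmono
  simp only [hnorm, mul_div_assoc]
  exact ⟨hmono.const_mul_of_neg (by norm_num), hmono⟩

/-- Let `V` be a finite-dimensional complex inner product space,
`φ : V → V` self-adjoint, and `v ≠ 0` not an eigenvector of `φ`.  Then along the flow
`t ↦ e^{tφ} v` the height function `t ↦ -(1/2) ⟪φ e^{tφ}v, e^{tφ}v⟫ / ⟪e^{tφ}v, e^{tφ}v⟫`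
is strictly decreasing; equivalently the Rayleigh quotient
`t ↦ ⟪φ e^{tφ}v, e^{tφ}v⟫ / ⟪e^{tφ}v, e^{tφ}v⟫` is strictly increasing. -/
theorem height_strictAnti_along_flow
    {V : Type*} [NormedAddCommGroup V] [InnerProductSpace ℂ V] [FiniteDimensional ℂ V]
    (φ : V →ₗ[ℂ] V) (hφ : LinearMap.IsSymmetric φ) (v : V) (hv : v ≠ 0)
    (hev : ¬∃ c : ℂ, φ v = c • v) :
    StrictAnti (fun t : ℝ =>
      -(1 / 2) *
        Complex.re ⟪φ (NormedSpace.exp (t • LinearMap.toContinuousLinearMap φ) v),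
            NormedSpace.exp (t • LinearMap.toContinuousLinearMap φ) v⟫ /
        Complex.re ⟪NormedSpace.exp (t • LinearMap.toContinuousLinearMap φ) v,
            NormedSpace.exp (t • LinearMap.toContinuousLinearMap φ) v⟫) ∧
    StrictMono (fun t : ℝ =>
      Complex.re ⟪φ (NormedSpace.exp (t • LinearMap.toContinuousLinearMap φ) v),
          NormedSpace.exp (t • LinearMap.toContinuousLinearMap φ) v⟫ /
      Complex.re ⟪NormedSpace.exp (t • LinearMap.toContinuousLinearMap φ) v,
          NormedSpace.exp (t • LinearMap.toContinuousLinearMap φ) v⟫) :=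
  height_strictAnti_along_flow_general φ hφ v hev
end

section
/- Let V be a finite-dimensional complex inner product space and φ : V → V self-adjoint. Every orbit of the projective flow Φ generated by φ has limits as t → ±∞. Precisely, write v ≠ 0 as v = Σ_{ν ∈ spec(φ)} v_ν with v_ν ∈ V_ν, and set w₊ = max{ν ∈ spec(φ) : v_ν ≠ 0} and w₋ = min{ν ∈ spec(φ) : v_ν ≠ 0}. Then in ℙ(V), lim_{t→+∞} Φ(t,[v]) = [v_{w₊}] and lim_{t→−∞} Φ(t,[v]) = [v_{w₋}]. -/
open scoped LinearAlgebra.Projectivization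
open Filter

variable {V : Type*} [NormedAddCommGroup V] [InnerProductSpace ℂ V] [FiniteDimensional ℂ V]

/-- The quotient topology on complex projective space. -/
noncomputable instance instTopPV : TopologicalSpace (ℙ ℂ V) :=
  @instTopologicalSpaceQuotient _ (projectivizationSetoid ℂ V) _

theorem exp_toLinearMap_injective (ψ : V →L[ℂ] V) :
    Function.Injective (NormedSpace.exp ψ).toLinearMap := by
  letI : NormedAlgebra ℚ (V →L[ℂ] V) := .restrictScalars ℚ ℂ _
  obtain ⟨u, hu⟩ := NormedSpace.isUnit_exp ψ
  intro a b hab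
  have h2 : (↑u⁻¹ * ↑u : V →L[ℂ] V) a = (↑u⁻¹ * ↑u : V →L[ℂ] V) b := by
    simp only [ContinuousLinearMap.mul_apply]
    rw [hu]
    exact congrArg _ hab
  simpa [u.inv_mul] using h2

/-- The projective flow generated by a linear map `φ`: `Φ(t, [v]) = [e^{tφ} v]`. -/
noncomputable def projFlow (φ : V →ₗ[ℂ] V) (t : ℝ) : ℙ ℂ V → ℙ ℂ V :=
  Projectivization.map
    (NormedSpace.exp (t • LinearMap.toContinuousLinearMap φ)).toLinearMap
    (exp_toLinearMap_injective _)

/-! On the eigenspace decomposition, `e^{tφ} v = ∑ ν, e^{tν} v_ν`. Rescaling by `e^{-t w}`,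
which does not move the point of `ℙ(V)`, gives `∑ ν, e^{t(ν - w)} v_ν`, in which every term
with `ν ≠ w` decays when `w` is the top (as `t → +∞`) or bottom (as `t → -∞`) eigenvalue
present; the limit `v_w ≠ 0` then passes to `ℙ(V)` through the continuous quotient map. -/

open Topology

theorem NormedSpace.exp_apply_of_apply_eq_smul {𝕜 E : Type*} [RCLike 𝕜] [NormedAddCommGroup E]
    [NormedSpace 𝕜 E] [CompleteSpace E] (ψ : E →L[𝕜] E) {μ : 𝕜} {x : E} (hx : ψ x = μ • x) :
    exp ψ x = exp μ • x := by
  have hpow (n : ℕ) : (ψ ^ n) x = μ ^ n • x := by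
    induction n with
    | zero => simp
    | succ n ih => rw [pow_succ', mul_apply_eq_comp, ih, map_smul, hx, smul_smul, pow_succ]
  refine ((exp_series_hasSum_exp' (𝕂 := 𝕜) ψ).mapL (.apply 𝕜 E x)).unique ?_
  simpa only [ContinuousLinearMap.apply_apply, smul_apply, hpow, smul_smul, smul_eq_mul]
    using (exp_series_hasSum_exp' (𝕂 := 𝕜) μ).smul_const x

theorem tendsto_sum_smul_of_tendsto_single {ι α 𝕜 E : Type*} [NormedRing 𝕜]
    [NormedAddCommGroup E] [Module 𝕜 E] [ContinuousSMul 𝕜 E] {l : Filter α} {s : Finset ι}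
    {w : ι} (hw : w ∈ s) (g : ι → α → 𝕜) (c : ι → E) (hgw : Tendsto (g w) l (𝓝 1))
    (hg : ∀ ν ∈ s, ν ≠ w → Tendsto (g ν) l (𝓝 0)) :
    Tendsto (fun a => ∑ ν ∈ s, g ν a • c ν) l (𝓝 (c w)) := by
  classical
  have hlim : ∀ ν ∈ s, Tendsto (fun a => g ν a • c ν) l (𝓝 (if ν = w then c w else 0)) := by
    intro ν hν
    split_ifs with h
    · subst h
      simpa using hgw.smul_const (c ν)
    · simpa using (hg ν hν h).smul_const (c ν)
  simpa [Finset.sum_ite_eq', hw] using tendsto_finsetSum s hlim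

namespace Projectivization

theorem tendsto_mk_of_smul_tendsto {W α : Type*} [NormedAddCommGroup W] [InnerProductSpace ℂ W]
    {l : Filter α} {f : α → W} (hf : ∀ a, f a ≠ 0) {r : α → ℂ} (hr : ∀ a, r a ≠ 0) {x : W}
    (hx : x ≠ 0) (h : Tendsto (fun a => r a • f a) l (𝓝 x)) :
    Tendsto (fun a => mk ℂ (f a) (hf a)) l (𝓝 (mk ℂ x hx)) := by
  have hrf (a : α) : r a • f a ≠ 0 := smul_ne_zero (hr a) (hf a)
  have hmk : Continuous fun y : {y : W // y ≠ 0} => mk ℂ y.1 y.2 := continuous_quotient_mk'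
  have hsub : Tendsto (fun a => (⟨r a • f a, hrf a⟩ : {y : W // y ≠ 0})) l (𝓝 ⟨x, hx⟩) :=
    tendsto_subtype_rng.mpr h
  refine ((hmk.tendsto _).comp hsub).congr fun a => ?_
  exact (mk_eq_mk_iff' ℂ _ _ _ _).mpr ⟨r a, rfl⟩

end Projectivization

theorem exp_smul_apply_sum_eigenvectors {E : Type*} [NormedAddCommGroup E] [NormedSpace ℂ E]
    [CompleteSpace E] (ψ : E →L[ℂ] E) (s : Finset ℝ) (c : ℝ → E)
    (hc : ∀ ν ∈ s, ψ (c ν) = (ν : ℂ) • c ν) (t : ℝ) :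
    NormedSpace.exp (t • ψ) (∑ ν ∈ s, c ν) = ∑ ν ∈ s, Complex.exp (t * ν) • c ν := by
  rw [map_sum, Complex.exp_eq_exp_ℂ]
  refine Finset.sum_congr rfl fun ν hν => NormedSpace.exp_apply_of_apply_eq_smul _ ?_
  rw [smul_apply, hc ν hν, smul_comm, ← Complex.coe_smul, smul_smul, mul_comm]

theorem projFlow_tendsto_of_dominant (φ : V →ₗ[ℂ] V) (s : Finset ℝ) (c : ℝ → V)
    (hmem : ∀ ν ∈ s, c ν ∈ Module.End.eigenspace φ (ν : ℂ)) (v : V) (hv0 : v ≠ 0)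
    (hdecomp : v = ∑ ν ∈ s, c ν) {w : ℝ} (hw : w ∈ s) (hcw : c w ≠ 0) {l : Filter ℝ}
    (hdom : ∀ ν ∈ s, ν ≠ w → Tendsto (fun t : ℝ => Real.exp (t * (ν - w))) l (𝓝 0)) :
    Tendsto (fun t : ℝ => projFlow φ t (Projectivization.mk ℂ v hv0)) l
      (𝓝 (Projectivization.mk ℂ (c w) hcw)) := by
  have hexp := exp_smul_apply_sum_eigenvectors (LinearMap.toContinuousLinearMap φ) s c
    fun ν hν => Module.End.mem_eigenspace_iff.mp (hmem ν hν)
  simp only [projFlow, Projectivization.map_mk]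
  refine Projectivization.tendsto_mk_of_smul_tendsto _ (r := fun t : ℝ => Complex.exp (-(t * w)))
    (fun t => Complex.exp_ne_zero _) hcw ?_
  have hrescale (t : ℝ) : Complex.exp (-(t * w)) •
      NormedSpace.exp (t • LinearMap.toContinuousLinearMap φ) v =
      ∑ ν ∈ s, (Real.exp (t * (ν - w)) : ℂ) • c ν := by
    rw [hdecomp, hexp, Finset.smul_sum]
    refine Finset.sum_congr rfl fun ν _ => ?_
    rw [smul_smul, ← Complex.exp_add, Complex.ofReal_exp]
    push_cast
    ring_nf
  simp only [ContinuousLinearMap.coe_coe, hrescale]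
  refine tendsto_sum_smul_of_tendsto_single hw _ c (by simpa using tendsto_const_nhds)
    fun ν hν hνw => ?_
  simpa using (hdom ν hν hνw).ofReal

theorem projFlow_orbit_limits_general
    {V : Type*} [NormedAddCommGroup V] [InnerProductSpace ℂ V] [FiniteDimensional ℂ V]
    (φ : V →ₗ[ℂ] V)
    (s : Finset ℝ) (hs : s.Nonempty) (c : ℝ → V)
    (hmem : ∀ ν ∈ s, c ν ∈ Module.End.eigenspace φ (ν : ℂ))
    (hne : ∀ ν ∈ s, c ν ≠ 0)
    (v : V) (hv0 : v ≠ 0) (hdecomp : v = ∑ ν ∈ s, c ν) :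
    Tendsto (fun t : ℝ => projFlow φ t (Projectivization.mk ℂ v hv0)) atTop
      (nhds (Projectivization.mk ℂ (c (s.max' hs)) (hne _ (s.max'_mem hs)))) ∧
    Tendsto (fun t : ℝ => projFlow φ t (Projectivization.mk ℂ v hv0)) atBot
      (nhds (Projectivization.mk ℂ (c (s.min' hs)) (hne _ (s.min'_mem hs)))) := by
  constructor
  · refine projFlow_tendsto_of_dominant φ s c hmem v hv0 hdecomp (s.max'_mem hs) _
      fun ν hν hνw => ?_
    have hlt : ν - s.max' hs < 0 := sub_neg.mpr ((s.le_max' ν hν).lt_of_ne hνw)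
    exact Real.tendsto_exp_atBot.comp (tendsto_id.atTop_mul_const_of_neg hlt)
  · refine projFlow_tendsto_of_dominant φ s c hmem v hv0 hdecomp (s.min'_mem hs) _
      fun ν hν hνw => ?_
    have hlt : 0 < ν - s.min' hs := sub_pos.mpr ((s.min'_le ν hν).lt_of_ne' hνw)
    exact Real.tendsto_exp_atBot.comp (tendsto_id.atBot_mul_const hlt)

/-- Every orbit of the projective flow generated by a self-adjoint `φ`
has limits as `t → ±∞`: writing `v = Σ_{ν} v_ν` with `v_ν ∈ V_ν`, and letting `w₊`/`w₋` be
the largest/smallest eigenvalue with nonzero component, `Φ(t,[v]) → [v_{w₊}]` as `t → +∞`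
and `Φ(t,[v]) → [v_{w₋}]` as `t → −∞`. -/
theorem projFlow_orbit_limits
    {V : Type*} [NormedAddCommGroup V] [InnerProductSpace ℂ V] [FiniteDimensional ℂ V]
    (φ : V →ₗ[ℂ] V) (hφ : LinearMap.IsSymmetric φ)
    (s : Finset ℝ) (hs : s.Nonempty) (c : ℝ → V)
    (hmem : ∀ ν ∈ s, c ν ∈ Module.End.eigenspace φ (ν : ℂ))
    (hne : ∀ ν ∈ s, c ν ≠ 0)
    (v : V) (hv0 : v ≠ 0) (hdecomp : v = ∑ ν ∈ s, c ν) :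
    Tendsto (fun t : ℝ => projFlow φ t (Projectivization.mk ℂ v hv0)) atTop
      (nhds (Projectivization.mk ℂ (c (s.max' hs)) (hne _ (s.max'_mem hs)))) ∧
    Tendsto (fun t : ℝ => projFlow φ t (Projectivization.mk ℂ v hv0)) atBot
      (nhds (Projectivization.mk ℂ (c (s.min' hs)) (hne _ (s.min'_mem hs)))) :=
  projFlow_orbit_limits_general φ s hs c hmem hne v hv0 hdecomp
end

section
/- Let M be a compact metric space and Φ a continuous flow on M such that lim_{t→±∞} Φ(t,x) exists for every x ∈ M. Then for any closed invariant subset A ⊆ M: (i) W⁺(A) = ⋃_{x ∈ A_fix} W⁺(x) and W⁻(A) = ⋃_{x ∈ A_fix} W⁻(x); (ii) the set of fixed points contained in W⁺(A) equals A_fix, and likewise the set of fixed points contained in W⁻(A) equals A_fix. -/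
open Filter

variable {M : Type*} [MetricSpace M] [CompactSpace M]

/-- The set of fixed points of a flow. -/
def fixedPoints (Φ : Flow ℝ M) : Set M := {x : M | ∀ t : ℝ, Φ t x = x}

/-- The stable set `W⁺(A) = {x | dist(Φ(t,x), A) → 0 as t → +∞}` of a set `A`
(stated with the extended distance, so that `W⁺(∅) = ∅` as in the paper). -/
def wPlus (Φ : Flow ℝ M) (A : Set M) : Set M :=
  {x : M | Tendsto (fun t : ℝ => EMetric.infEdist (Φ t x) A) atTop (nhds 0)}

/-- The unstable set `W⁻(A) = {x | dist(Φ(t,x), A) → 0 as t → −∞}` of a set `A`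
(stated with the extended distance, so that `W⁻(∅) = ∅` as in the paper). -/
def wMinus (Φ : Flow ℝ M) (A : Set M) : Set M :=
  {x : M | Tendsto (fun t : ℝ => EMetric.infEdist (Φ t x) A) atBot (nhds 0)}

/-- Every flow line has a sink and a source: `lim_{t→±∞} Φ(t,x)` exists for all `x`. -/
def allOrbitsConverge (Φ : Flow ℝ M) : Prop :=
  ∀ x : M, (∃ y : M, Tendsto (fun t : ℝ => Φ t x) atTop (nhds y)) ∧
    (∃ y : M, Tendsto (fun t : ℝ => Φ t x) atBot (nhds y))

/-- An attractor: a compact invariant set admitting a neighborhood `U` with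
`Φ(t, cl U) ⊆ int U` for all `t > 0` and `A = ⋂_{t ≥ 0} Φ(t, U)`. -/
def IsAttractor (Φ : ℝ → M → M) (A : Set M) : Prop :=
  IsCompact A ∧ (∀ t : ℝ, Φ t '' A = A) ∧
    ∃ U : Set M, A ⊆ interior U ∧ (∀ t > (0 : ℝ), Φ t '' closure U ⊆ interior U) ∧
      A = ⋂ t ∈ Set.Ici (0 : ℝ), Φ t '' U

/-! The limit `y` of a flow line `Φ(t, x)` as `t → ±∞` is a fixed point, since `Φ(s, Φ(t, x))`
tends both to `Φ(s, y)` and (being `Φ(s + t, x)`) to `y`. So a point of `W^±(A)` converges to a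
fixed point which, `A` being closed, lies in `A`; conversely convergence to a point of `A` puts the
point in `W^±(A)`. For a fixed point `m` the distance `dist(Φ(t, m), A)` is constant, so `m` lies in
`W^±(A)` exactly when it lies in `A`. -/

open Topology

theorem Flow.isFixedPt_of_tendsto {X : Type*} [TopologicalSpace X] [T2Space X] (Φ : Flow ℝ X)
    {l : Filter ℝ} [l.NeBot] (hl : ∀ s : ℝ, Tendsto (s + ·) l l) {x y : X}
    (h : Tendsto (fun t => Φ t x) l (𝓝 y)) (s : ℝ) : Function.IsFixedPt (Φ s) y := by
  have h_image : Tendsto (fun t => Φ s (Φ t x)) l (𝓝 (Φ s y)) :=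
    ((Φ.continuous_toFun s).tendsto y).comp h
  have h_shift : Tendsto (fun t => Φ (s + t) x) l (𝓝 y) := h.comp (hl s)
  simp only [Φ.map_add] at h_shift
  exact tendsto_nhds_unique h_image h_shift

section InfEDist

variable {α X : Type*} [PseudoEMetricSpace X] {l : Filter α} {f : α → X} {s : Set X} {y : X}

theorem tendsto_infEDist_singleton_iff :
    Tendsto (fun t => Metric.infEDist (f t) {y}) l (𝓝 0) ↔ Tendsto f l (𝓝 y) := by
  simp only [Metric.infEDist_singleton, tendsto_iff_edist_tendsto_0]

theorem tendsto_infEDist_of_tendsto_of_mem (hf : Tendsto f l (𝓝 y)) (hy : y ∈ s) :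
    Tendsto (fun t => Metric.infEDist (f t) s) l (𝓝 0) :=
  tendsto_of_tendsto_of_tendsto_of_le_of_le tendsto_const_nhds
    (tendsto_iff_edist_tendsto_0.1 hf) (fun _ => zero_le)
    (fun _ => Metric.infEDist_le_edist_of_mem hy)

theorem mem_of_tendsto_of_tendsto_infEDist [l.NeBot] (hs : IsClosed s) (hf : Tendsto f l (𝓝 y))
    (hfs : Tendsto (fun t => Metric.infEDist (f t) s) l (𝓝 0)) : y ∈ s :=
  (Metric.mem_iff_infEDist_zero_of_closed hs).2 <|
    tendsto_nhds_unique ((Metric.continuous_infEDist.tendsto y).comp hf) hfs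

end InfEDist

section StableSets

variable {X : Type*} [MetricSpace X]

/-- `W⁺` and `W⁻` are the cases `l = atTop` and `l = atBot`. -/
def stableSetAlong (Φ : Flow ℝ X) (l : Filter ℝ) (A : Set X) : Set X :=
  {x : X | Tendsto (fun t => Metric.infEDist (Φ t x) A) l (𝓝 0)}

variable (Φ : Flow ℝ X) {A : Set X}

theorem stableSetAlong_eq_biUnion {l : Filter ℝ} [l.NeBot] (hl : ∀ s : ℝ, Tendsto (s + ·) l l)
    (hconv : ∀ x, ∃ y, Tendsto (fun t => Φ t x) l (𝓝 y)) (hA : IsClosed A) :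
    stableSetAlong Φ l A = ⋃ y ∈ A ∩ fixedPoints Φ, stableSetAlong Φ l {y} := by
  ext x
  simp only [stableSetAlong, Set.mem_ofPred_eq, Set.mem_iUnion, Set.mem_inter_iff, exists_prop,
    tendsto_infEDist_singleton_iff]
  constructor
  · intro hx
    obtain ⟨y, hy⟩ := hconv x
    exact ⟨y, ⟨mem_of_tendsto_of_tendsto_infEDist hA hy hx, Φ.isFixedPt_of_tendsto hl hy⟩, hy⟩
  · rintro ⟨y, ⟨hyA, -⟩, hy⟩
    exact tendsto_infEDist_of_tendsto_of_mem hy hyA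

theorem stableSetAlong_inter_fixedPoints (l : Filter ℝ) [l.NeBot] (hA : IsClosed A) :
    stableSetAlong Φ l A ∩ fixedPoints Φ = A ∩ fixedPoints Φ := by
  ext m
  simp only [Set.mem_inter_iff, and_congr_left_iff]
  intro hm
  have h_const : Tendsto (fun t => Φ t m) l (𝓝 m) := by
    simp only [hm _, tendsto_const_nhds]
  exact ⟨mem_of_tendsto_of_tendsto_infEDist hA h_const, tendsto_infEDist_of_tendsto_of_mem h_const⟩

end StableSets

theorem stable_unstable_of_closed_invariant_general
    {M : Type*} [MetricSpace M] (Φ : Flow ℝ M)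
    (hconv : allOrbitsConverge Φ)
    (A : Set M) (hA : IsClosed A) :
    (wPlus Φ A = ⋃ x ∈ A ∩ fixedPoints Φ, wPlus Φ {x}) ∧
    (wMinus Φ A = ⋃ x ∈ A ∩ fixedPoints Φ, wMinus Φ {x}) ∧
    (wPlus Φ A ∩ fixedPoints Φ = A ∩ fixedPoints Φ) ∧
    (wMinus Φ A ∩ fixedPoints Φ = A ∩ fixedPoints Φ) :=
  ⟨stableSetAlong_eq_biUnion Φ (fun s => tendsto_atTop_add_const_left atTop s tendsto_id)
      (fun x => (hconv x).1) hA,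
    stableSetAlong_eq_biUnion Φ (fun s => tendsto_atBot_add_const_left atBot s tendsto_id)
      (fun x => (hconv x).2) hA,
    stableSetAlong_inter_fixedPoints Φ atTop hA,
    stableSetAlong_inter_fixedPoints Φ atBot hA⟩

/-- If every flow line of a continuous flow on a compact metric space
has a sink and a source, then for any closed invariant `A ⊆ M`:
(i) `W^±(A) = ⋃_{x ∈ A_fix} W^±(x)`; (ii) the fixed points in `W^±(A)` are exactly `A_fix`. -/
theorem stable_unstable_of_closed_invariant
    {M : Type*} [MetricSpace M] [CompactSpace M] (Φ : Flow ℝ M)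
    (hconv : allOrbitsConverge Φ)
    (A : Set M) (hA : IsClosed A) (hinv : ∀ t : ℝ, Φ t '' A = A) :
    (wPlus Φ A = ⋃ x ∈ A ∩ fixedPoints Φ, wPlus Φ {x}) ∧
    (wMinus Φ A = ⋃ x ∈ A ∩ fixedPoints Φ, wMinus Φ {x}) ∧
    (wPlus Φ A ∩ fixedPoints Φ = A ∩ fixedPoints Φ) ∧
    (wMinus Φ A ∩ fixedPoints Φ = A ∩ fixedPoints Φ) :=
  stable_unstable_of_closed_invariant_general Φ hconv A hA
end

section
/- Let M be a compact metric space and Φ a continuous flow on M such that lim_{t→±∞} Φ(t,x) exists for every x ∈ M. Let A be an attractor for Φ and A* = M ∖ W⁺(A) its dual repellor. Then A* = ⋃_{x ∈ A*_fix} W⁺(x) and this set is closed, and A = ⋃_{x ∈ A_fix} W⁻(x) and this set is closed. -/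
/-!
The limit `z` of a forward orbit is a fixed point, and the orbit is attracted to `A` exactly
when `z ∈ cl A`, which for a fixed point is the same as `z ∈ W⁺(A)`: this describes
`M ∖ W⁺(A)` by fixed points for every `A`. If `U` is a trapping neighbourhood of the attractor
`A`, a backward orbit that keeps returning to `cl U` lies in `int U` at every earlier time,
hence in `⋂_{t ≥ 0} Φ(t, U) = A`. Applied to a constant orbit this puts the fixed points of
`cl U` into `A`, so `cl U ⊆ W⁺(A)` and `W⁺(A) = ⋃ₜ Φ(t, ·)⁻¹(int U)` is open; applied to a
point of `W⁻(A)` it gives `W⁻(A) ⊆ A`.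
-/

open Filter

variable {M : Type*} [MetricSpace M] [CompactSpace M]

open Topology Set

lemma tendsto_infEDist_zero_iff {X ι : Type*} [PseudoEMetricSpace X] {l : Filter ι} [l.NeBot]
    {f : ι → X} {z : X} {A : Set X} (hf : Tendsto f l (𝓝 z)) :
    Tendsto (fun i => Metric.infEDist (f i) A) l (𝓝 0) ↔ z ∈ closure A := by
  have hlim := ((Metric.continuous_infEDist (s := A)).tendsto z).comp hf
  rw [Metric.mem_closure_iff_infEDist_zero]
  exact ⟨tendsto_nhds_unique hlim, fun hz => hz ▸ hlim⟩

lemma eventually_mem_thickening_of_tendsto_infEDist {X ι : Type*} [PseudoEMetricSpace X]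
    {l : Filter ι} {f : ι → X} {A : Set X}
    (hf : Tendsto (fun i => Metric.infEDist (f i) A) l (𝓝 0)) {δ : ℝ} (hδ : 0 < δ) :
    ∀ᶠ i in l, f i ∈ Metric.thickening δ A :=
  (hf.eventually_lt_const (ENNReal.ofReal_pos.2 hδ)).mono fun _ hi =>
    Metric.mem_thickening_iff_infEDist_lt.2 hi

section Flows

variable {X : Type*} [MetricSpace X] {Φ : Flow ℝ X}

lemma mem_fixedPoints_of_tendsto {l : Filter ℝ} [l.NeBot]
    (hl : ∀ s, Tendsto (fun t => s + t) l l) {y z : X}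
    (h : Tendsto (fun t => Φ t y) l (𝓝 z)) : z ∈ fixedPoints Φ := fun s => by
  have hshift : Tendsto (fun t => Φ s (Φ t y)) l (𝓝 z) := by
    simpa only [Function.comp_def, Φ.map_add] using h.comp (hl s)
  exact tendsto_nhds_unique (((Φ.continuous_toFun s).tendsto z).comp h) hshift

lemma mem_fixedPoints_of_tendsto_atTop {y z : X}
    (h : Tendsto (fun t => Φ t y) atTop (𝓝 z)) : z ∈ fixedPoints Φ :=
  mem_fixedPoints_of_tendsto (fun s => tendsto_atTop_add_const_left _ s tendsto_id) h

lemma mem_fixedPoints_of_tendsto_atBot {y z : X}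
    (h : Tendsto (fun t => Φ t y) atBot (𝓝 z)) : z ∈ fixedPoints Φ :=
  mem_fixedPoints_of_tendsto (fun s => tendsto_atBot_add_const_left _ s tendsto_id) h

lemma tendsto_of_mem_fixedPoints {l : Filter ℝ} {z : X} (hz : z ∈ fixedPoints Φ) :
    Tendsto (fun t => Φ t z) l (𝓝 z) := by
  simp only [hz _, tendsto_const_nhds]

lemma mem_wPlus_iff_of_tendsto {A : Set X} {y z : X}
    (h : Tendsto (fun t => Φ t y) atTop (𝓝 z)) : y ∈ wPlus Φ A ↔ z ∈ closure A :=
  tendsto_infEDist_zero_iff h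

lemma mem_wMinus_iff_of_tendsto {A : Set X} {y z : X}
    (h : Tendsto (fun t => Φ t y) atBot (𝓝 z)) : y ∈ wMinus Φ A ↔ z ∈ closure A :=
  tendsto_infEDist_zero_iff h

lemma mem_wPlus_iff_of_mem_fixedPoints {A : Set X} {z : X} (hz : z ∈ fixedPoints Φ) :
    z ∈ wPlus Φ A ↔ z ∈ closure A :=
  mem_wPlus_iff_of_tendsto (tendsto_of_mem_fixedPoints hz)

lemma mem_wPlus_singleton_iff {x y : X} :
    y ∈ wPlus Φ {x} ↔ Tendsto (fun t => Φ t y) atTop (𝓝 x) := by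
  simp only [wPlus, mem_ofPred_eq, tendsto_iff_edist_tendsto_0, ← Metric.infEDist_singleton]
  exact Iff.rfl

lemma mem_wMinus_singleton_iff {x y : X} :
    y ∈ wMinus Φ {x} ↔ Tendsto (fun t => Φ t y) atBot (𝓝 x) := by
  simp only [wMinus, mem_ofPred_eq, tendsto_iff_edist_tendsto_0, ← Metric.infEDist_singleton]
  exact Iff.rfl

lemma flow_mem_wPlus_iff {A : Set X} {y : X} (t : ℝ) :
    Φ t y ∈ wPlus Φ A ↔ y ∈ wPlus Φ A := by
  simp only [wPlus, mem_ofPred_eq, ← Φ.map_add]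
  exact (tendsto_map'_iff (f := fun s => Metric.infEDist (Φ s y) A) (g := (· + t))).symm.trans
    (by rw [map_add_atTop_eq]; rfl)

lemma compl_wPlus_eq_biUnion (hconv : ∀ y : X, ∃ z, Tendsto (fun t => Φ t y) atTop (𝓝 z))
    (A : Set X) : (wPlus Φ A)ᶜ = ⋃ x ∈ (wPlus Φ A)ᶜ ∩ fixedPoints Φ, wPlus Φ {x} := by
  ext y
  simp only [mem_iUnion, mem_compl_iff, mem_inter_iff, exists_prop, mem_wPlus_singleton_iff]
  constructor
  · intro hy
    obtain ⟨z, hz⟩ := hconv y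
    have hzfix := mem_fixedPoints_of_tendsto_atTop hz
    refine ⟨z, ⟨?_, hzfix⟩, hz⟩
    rwa [mem_wPlus_iff_of_mem_fixedPoints hzfix, ← mem_wPlus_iff_of_tendsto hz]
  · rintro ⟨x, ⟨hx, hxfix⟩, hyx⟩
    rwa [mem_wPlus_iff_of_tendsto hyx, ← mem_wPlus_iff_of_mem_fixedPoints hxfix]

lemma eq_biUnion_wMinus (hconv : ∀ y : X, ∃ z, Tendsto (fun t => Φ t y) atBot (𝓝 z))
    {A : Set X} (hA : IsClosed A) (hinv : ∀ t, MapsTo (Φ t) A A) (hW : wMinus Φ A ⊆ A) :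
    A = ⋃ x ∈ A ∩ fixedPoints Φ, wMinus Φ {x} := by
  refine subset_antisymm (fun y hy => ?_) (iUnion₂_subset fun x hx y hy => hW ?_)
  · obtain ⟨z, hz⟩ := hconv y
    have hzA : z ∈ A := hA.mem_of_tendsto hz (Eventually.of_forall fun t => hinv t hy)
    exact mem_biUnion ⟨hzA, mem_fixedPoints_of_tendsto_atBot hz⟩
      (mem_wMinus_singleton_iff.2 hz)
  · rw [mem_wMinus_singleton_iff] at hy
    exact (mem_wMinus_iff_of_tendsto hy).2 (subset_closure hx.1)

section Trapping

variable {U : Set X} (hU : ∀ t > (0 : ℝ), Φ t '' closure U ⊆ interior U)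
include hU

lemma mem_image_of_frequently_atBot_mem_closure {y : X}
    (hy : ∃ᶠ s in atBot, Φ s y ∈ closure U) (t : ℝ) : y ∈ Φ t '' U := by
  obtain ⟨s, hsU, hst⟩ := (hy.and_eventually (eventually_lt_atBot (-t))).exists
  have hback : Φ (-t) y ∈ interior U :=
    hU (-t - s) (by linarith) ⟨Φ s y, hsU, by rw [← Φ.map_add, sub_add_cancel]⟩
  exact ⟨Φ (-t) y, interior_subset hback,
    by rw [← Φ.map_add, add_neg_cancel, Φ.map_zero_apply]⟩

lemma mem_biInter_image_of_frequently_atBot_mem_closure {y : X}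
    (hy : ∃ᶠ s in atBot, Φ s y ∈ closure U) : y ∈ ⋂ t ∈ Ici (0 : ℝ), Φ t '' U :=
  mem_iInter₂.2 fun t _ => mem_image_of_frequently_atBot_mem_closure hU hy t

lemma tendsto_atTop_mem_closure {y z : X} (hy : y ∈ closure U)
    (h : Tendsto (fun t => Φ t y) atTop (𝓝 z)) : z ∈ closure U :=
  isClosed_closure.mem_of_tendsto h <| (eventually_gt_atTop 0).mono fun t ht =>
    interior_subset_closure (hU t ht ⟨y, hy, rfl⟩)

end Trapping

namespace IsAttractor

variable {A : Set X} (hA : IsAttractor (fun t x => Φ t x) A)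
include hA

lemma wMinus_subset : wMinus Φ A ⊆ A := by
  obtain ⟨hAc, -, U, hAU, hU, hAeq⟩ := hA
  obtain ⟨δ, hδ, hδU⟩ := hAc.exists_thickening_subset_open isOpen_interior hAU
  intro y hy
  have hfreq : ∃ᶠ s in atBot, Φ s y ∈ closure U :=
    (eventually_mem_thickening_of_tendsto_infEDist hy hδ).frequently.mono fun _ hs =>
      interior_subset_closure (hδU hs)
  exact hAeq ▸ mem_biInter_image_of_frequently_atBot_mem_closure hU hfreq

lemma isOpen_wPlus (hconv : ∀ y : X, ∃ z, Tendsto (fun t => Φ t y) atTop (𝓝 z)) :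
    IsOpen (wPlus Φ A) := by
  obtain ⟨hAc, -, U, hAU, hU, hAeq⟩ := hA
  obtain ⟨δ, hδ, hδU⟩ := hAc.exists_thickening_subset_open isOpen_interior hAU
  have hclosure : closure U ⊆ wPlus Φ A := fun y hy => by
    obtain ⟨z, hz⟩ := hconv y
    have hzU := tendsto_atTop_mem_closure hU hy hz
    have hzA : z ∈ A := hAeq ▸ mem_biInter_image_of_frequently_atBot_mem_closure hU
      (Frequently.of_forall fun s => (mem_fixedPoints_of_tendsto_atTop hz s).symm ▸ hzU)
    exact (mem_wPlus_iff_of_tendsto hz).2 (subset_closure hzA)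
  have hW : wPlus Φ A = ⋃ t : ℝ, Φ t ⁻¹' interior U := by
    refine subset_antisymm (fun y hy => ?_) (iUnion_subset fun t y hy => ?_)
    · obtain ⟨t, ht⟩ := (eventually_mem_thickening_of_tendsto_infEDist hy hδ).exists
      exact mem_iUnion.2 ⟨t, hδU ht⟩
    · exact (flow_mem_wPlus_iff t).1 (hclosure (interior_subset_closure hy))
  rw [hW]
  exact isOpen_iUnion fun t => isOpen_interior.preimage (Φ.continuous_toFun t)

end IsAttractor

end Flows

theorem attractor_repellor_unions_general
    {M : Type*} [MetricSpace M] (Φ : Flow ℝ M)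
    (hconv : allOrbitsConverge Φ)
    (A : Set M) (hA : IsAttractor (fun t x => Φ t x) A) :
    (Set.univ \ wPlus Φ A
        = ⋃ x ∈ (Set.univ \ wPlus Φ A) ∩ fixedPoints Φ, wPlus Φ {x}) ∧
    IsClosed (Set.univ \ wPlus Φ A) ∧
    (A = ⋃ x ∈ A ∩ fixedPoints Φ, wMinus Φ {x}) ∧
    IsClosed A := by
  have hA_closed : IsClosed A := hA.1.isClosed
  have hA_mapsTo (t : ℝ) : MapsTo (Φ t) A A := fun y hy => hA.2.1 t ▸ mem_image_of_mem _ hy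
  simp only [← compl_eq_univ_sdiff]
  exact ⟨compl_wPlus_eq_biUnion (fun y => (hconv y).1) A,
    (hA.isOpen_wPlus fun y => (hconv y).1).isClosed_compl,
    eq_biUnion_wMinus (fun y => (hconv y).2) hA_closed hA_mapsTo hA.wMinus_subset,
    hA_closed⟩

/-- If every flow line has a sink and a source and `A` is an attractor
with dual repellor `A* = M ∖ W⁺(A)`, then `A* = ⋃_{x ∈ A*_fix} W⁺(x)` is closed and
`A = ⋃_{x ∈ A_fix} W⁻(x)` is closed. -/
theorem attractor_repellor_unions
    {M : Type*} [MetricSpace M] [CompactSpace M] (Φ : Flow ℝ M)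
    (hconv : allOrbitsConverge Φ)
    (A : Set M) (hA : IsAttractor (fun t x => Φ t x) A) :
    (Set.univ \ wPlus Φ A
        = ⋃ x ∈ (Set.univ \ wPlus Φ A) ∩ fixedPoints Φ, wPlus Φ {x}) ∧
    IsClosed (Set.univ \ wPlus Φ A) ∧
    (A = ⋃ x ∈ A ∩ fixedPoints Φ, wMinus Φ {x}) ∧
    IsClosed A :=
  attractor_repellor_unions_general Φ hconv A hA
end

section
/- Let M be a compact metric space and Φ a continuous flow on M such that lim_{t→±∞} Φ(t,x) exists for every x ∈ M. Let A be an attractor for Φ and A* = M ∖ W⁺(A) its dual repellor. Then M is the disjoint union M = A ∪ (W⁺(A) ∩ W⁻(A*)) ∪ A*: the three sets are pairwise disjoint and cover M. -/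
open Filter

variable {M : Type*} [MetricSpace M] [CompactSpace M]

/-!
Points of the trapping region `U` converge forward to fixed points in `closure U`; such a point
`y = Φ(1, y)` lies in `interior U`, hence in every `Φ(t, U)`, i.e. in `A`. Hence
`A ⊆ interior W⁺(A)`, and as the backward limit of a point of `A` lies in `A`, it is not in
`closure A* = M ∖ interior W⁺(A)`. For `x ∈ W⁺(A) ∖ A` the backward limit `y` is a fixed point;
if `y ∈ W⁺(A)` then `y ∈ A ⊆ interior U`, so the backward orbit of `x` eventually lies in `U`
and `x ∈ ⋂_{t ≥ 0} Φ(t, U) = A`. So `y ∈ A*` and `x ∈ W⁻(A*)`.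
-/

open Topology

namespace Flow

variable {τ α : Type*} [TopologicalSpace τ] [AddMonoid τ] [TopologicalSpace α]

theorem isFixedPt_of_tendsto_s11 [T2Space α] (Φ : Flow τ α) {l : Filter τ} [l.NeBot]
    (hl : ∀ s, Tendsto (s + ·) l l) {x y : α} (h : Tendsto (fun t => Φ t x) l (𝓝 y))
    (s : τ) : Function.IsFixedPt (Φ s) y := by
  have hshift : Tendsto (fun t => Φ (s + t) x) l (𝓝 y) := h.comp (hl s)
  simp only [Φ.map_add] at hshift
  exact tendsto_nhds_unique (((Φ.continuous_toFun s).tendsto y).comp h) hshift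

end Flow

section TrappingRegion

variable {α : Type*} [TopologicalSpace α] (Φ : Flow ℝ α) {U : Set α}

theorem mapsTo_of_image_closure_subset_interior
    (htrap : ∀ t > (0 : ℝ), Φ t '' closure U ⊆ interior U) {t : ℝ} (ht : 0 ≤ t) :
    Set.MapsTo (Φ t) U U := by
  rcases ht.eq_or_lt with rfl | ht
  · simpa [Φ.map_zero] using Set.mapsTo_id U
  · exact fun u hu => interior_subset (htrap t ht ⟨u, subset_closure hu, rfl⟩)

theorem mem_iInter_image_of_eventually_atBot_mem
    (htrap : ∀ t > (0 : ℝ), Φ t '' closure U ⊆ interior U) {x : α}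
    (hx : ∀ᶠ t in atBot, Φ t x ∈ U) : x ∈ ⋂ t ∈ Set.Ici (0 : ℝ), Φ t '' U := by
  refine Set.mem_iInter₂.2 fun s (hs : 0 ≤ s) => ?_
  obtain ⟨r, hrU, hr⟩ := (hx.and (eventually_le_atBot (-s))).exists
  refine ⟨Φ (-r - s) (Φ r x),
    mapsTo_of_image_closure_subset_interior Φ htrap (by linarith) hrU, ?_⟩
  rw [← Φ.map_add, ← Φ.map_add, show s + (-r - s) + r = 0 by ring, Φ.map_zero_apply]

theorem mem_iInter_image_of_isFixedPt
    (htrap : ∀ t > (0 : ℝ), Φ t '' closure U ⊆ interior U) {y : α} (hyU : y ∈ closure U)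
    (hfix : ∀ t, Function.IsFixedPt (Φ t) y) : y ∈ ⋂ t ∈ Set.Ici (0 : ℝ), Φ t '' U := by
  have hy : y ∈ U := hfix 1 ▸ interior_subset (htrap 1 one_pos ⟨y, hyU, rfl⟩)
  exact mem_iInter_image_of_eventually_atBot_mem Φ htrap (.of_forall fun t => (hfix t).symm ▸ hy)

end TrappingRegion

section InfEDist

variable {α ι : Type*} [PseudoEMetricSpace α] {f : ι → α} {l : Filter ι} {y : α} {S : Set α}

theorem tendsto_infEDist_zero_of_tendsto (h : Tendsto f l (𝓝 y)) (hy : y ∈ S) :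
    Tendsto (fun t => Metric.infEDist (f t) S) l (𝓝 0) :=
  Metric.infEDist_zero_of_mem hy ▸ (Metric.continuous_infEDist.tendsto y).comp h

theorem mem_closure_of_tendsto_infEDist_zero [l.NeBot] (h : Tendsto f l (𝓝 y))
    (hS : Tendsto (fun t => Metric.infEDist (f t) S) l (𝓝 0)) : y ∈ closure S :=
  Metric.mem_closure_iff_infEDist_zero.2 <|
    tendsto_nhds_unique ((Metric.continuous_infEDist.tendsto y).comp h) hS

end InfEDist

section StableSets

variable {α : Type*} [MetricSpace α] (Φ : Flow ℝ α) {A U W : Set α} {x y : α}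

theorem mem_wPlus_of_tendsto (h : Tendsto (fun t => Φ t x) atTop (𝓝 y)) (hy : y ∈ A) :
    x ∈ wPlus Φ A :=
  tendsto_infEDist_zero_of_tendsto h hy

theorem mem_wMinus_of_tendsto (h : Tendsto (fun t => Φ t x) atBot (𝓝 y)) (hy : y ∈ A) :
    x ∈ wMinus Φ A :=
  tendsto_infEDist_zero_of_tendsto h hy

theorem mem_closure_of_isFixedPt_of_mem_wPlus (hfix : ∀ t, Function.IsFixedPt (Φ t) y)
    (hy : y ∈ wPlus Φ A) : y ∈ closure A :=
  mem_closure_of_tendsto_infEDist_zero (f := fun t => Φ t y)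
    (by simp only [fun t => (hfix t).eq, tendsto_const_nhds]) hy

theorem notMem_wMinus_compl_of_tendsto_atBot (h : Tendsto (fun t => Φ t x) atBot (𝓝 y))
    (hy : y ∈ interior W) : x ∉ wMinus Φ (Set.univ \ W) := fun hx => by
  have := mem_closure_of_tendsto_infEDist_zero h hx
  rw [← Set.compl_eq_univ_sdiff, closure_compl] at this
  exact this hy

variable (htrap : ∀ t > (0 : ℝ), Φ t '' closure U ⊆ interior U)
  (hAeq : A = ⋂ t ∈ Set.Ici (0 : ℝ), Φ t '' U)
include htrap hAeq

theorem subset_wPlus_of_forall_tendsto_atTop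
    (hconv : ∀ x, ∃ y, Tendsto (fun t => Φ t x) atTop (𝓝 y)) : U ⊆ wPlus Φ A := by
  intro u hu
  obtain ⟨y, hy⟩ := hconv u
  have hyU : y ∈ closure U := mem_closure_of_tendsto hy <|
    (eventually_ge_atTop 0).mono fun _ ht => mapsTo_of_image_closure_subset_interior Φ htrap ht hu
  have hfix := Φ.isFixedPt_of_tendsto_s11 (fun s => tendsto_atTop_add_const_left _ s tendsto_id) hy
  exact mem_wPlus_of_tendsto Φ hy (hAeq ▸ mem_iInter_image_of_isFixedPt Φ htrap hyU hfix)

theorem mem_wMinus_compl_wPlus_of_tendsto_atBot (hAc : IsClosed A) (hAU : A ⊆ interior U)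
    (h : Tendsto (fun t => Φ t x) atBot (𝓝 y)) (hx : x ∉ A) :
    x ∈ wMinus Φ (Set.univ \ wPlus Φ A) := by
  have hfix := Φ.isFixedPt_of_tendsto_s11 (fun s => tendsto_atBot_add_const_left _ s tendsto_id) h
  refine mem_wMinus_of_tendsto Φ h ⟨trivial, fun hyW => hx ?_⟩
  have hyA : y ∈ A := hAc.closure_subset (mem_closure_of_isFixedPt_of_mem_wPlus Φ hfix hyW)
  have hxU : ∀ᶠ t in atBot, Φ t x ∈ U :=
    (h.eventually_mem (isOpen_interior.mem_nhds (hAU hyA))).mono fun _ ht => interior_subset ht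
  exact hAeq ▸ mem_iInter_image_of_eventually_atBot_mem Φ htrap hxU

end StableSets

theorem attractor_repellor_decomposition_general
    {M : Type*} [MetricSpace M] (Φ : Flow ℝ M)
    (hconv : allOrbitsConverge Φ)
    (A : Set M) (hA : IsAttractor (fun t x => Φ t x) A) :
    (A ∪ (wPlus Φ A ∩ wMinus Φ (Set.univ \ wPlus Φ A)) ∪ (Set.univ \ wPlus Φ A)
        = Set.univ) ∧
    Disjoint A (wPlus Φ A ∩ wMinus Φ (Set.univ \ wPlus Φ A)) ∧
    Disjoint A (Set.univ \ wPlus Φ A) ∧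
    Disjoint (wPlus Φ A ∩ wMinus Φ (Set.univ \ wPlus Φ A)) (Set.univ \ wPlus Φ A) := by
  obtain ⟨hAc, hAinv, U, hAU, htrap, hAeq⟩ := hA
  have hUW : U ⊆ wPlus Φ A :=
    subset_wPlus_of_forall_tendsto_atTop Φ htrap hAeq fun x => (hconv x).1
  have hAW : A ⊆ interior (wPlus Φ A) := hAU.trans (interior_mono hUW)
  refine ⟨Set.eq_univ_of_forall fun x => ?_, Set.disjoint_left.2 fun a ha hm => ?_,
    Set.disjoint_left.2 fun a ha hm => hm.2 (interior_subset (hAW ha)),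
    Set.disjoint_left.2 fun x hx hm => hm.2 hx.1⟩
  · by_cases hxA : x ∈ A
    · exact .inl (.inl hxA)
    by_cases hxW : x ∈ wPlus Φ A
    · obtain ⟨y, hy⟩ := (hconv x).2
      exact .inl (.inr ⟨hxW,
        mem_wMinus_compl_wPlus_of_tendsto_atBot Φ htrap hAeq hAc.isClosed hAU hy hxA⟩)
    · exact .inr ⟨trivial, hxW⟩
  · obtain ⟨y, hy⟩ := (hconv a).2
    have hyA : y ∈ A := hAc.isClosed.mem_of_tendsto hy <|
      .of_forall fun t => hAinv t ▸ Set.mem_image_of_mem _ ha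
    exact notMem_wMinus_compl_of_tendsto_atBot Φ hy (hAW hyA) hm.2

/-- If every flow line has a sink and a source and `A` is an attractor
with dual repellor `A* = M ∖ W⁺(A)`, then `M = A ∪ (W⁺(A) ∩ W⁻(A*)) ∪ A*` is a
disjoint union. -/
theorem attractor_repellor_decomposition
    {M : Type*} [MetricSpace M] [CompactSpace M] (Φ : Flow ℝ M)
    (hconv : allOrbitsConverge Φ)
    (A : Set M) (hA : IsAttractor (fun t x => Φ t x) A) :
    (A ∪ (wPlus Φ A ∩ wMinus Φ (Set.univ \ wPlus Φ A)) ∪ (Set.univ \ wPlus Φ A)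
        = Set.univ) ∧
    Disjoint A (wPlus Φ A ∩ wMinus Φ (Set.univ \ wPlus Φ A)) ∧
    Disjoint A (Set.univ \ wPlus Φ A) ∧
    Disjoint (wPlus Φ A ∩ wMinus Φ (Set.univ \ wPlus Φ A)) (Set.univ \ wPlus Φ A) :=
  attractor_repellor_decomposition_general Φ hconv A hA
end

section
/- Let A be a complete normed unital ℝ-algebra, X, Y ∈ A and c ∈ ℝ with XY − YX = c·Y. Then for every t ∈ ℝ, exp(tX)·exp(Y)·exp(−tX) = exp(e^{tc}·Y). In particular, if c < 0 then exp(tX)·exp(Y)·exp(−tX) converges to the identity 1 as t → +∞. -/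
/-!
If `X Y - Y X = c • Y`, then `X Y = Y (X + c)`, so `Y` intertwines `exp (t • X)` with
`exp (t • X + t c) = e^{t c} • exp (t • X)`. Hence conjugation by `exp (t • X)` scales `Y` by
`e^{t c}`, and conjugation commutes with `exp`. For `c < 0` the scaled element tends to `0`, so its
exponential tends to `1`.
-/

open Filter NormedSpace

section

variable {A : Type*} [NormedRing A] [NormedAlgebra ℝ A] [CompleteSpace A]

theorem semiconjBy_exp_of_mul_sub_mul_eq_smul {a y : A} {s : ℝ} (h : a * y - y * a = s • y) :
    SemiconjBy (exp a) y (Real.exp s • y) := by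
  -- The library's `exp` lemmas ask for a `ℚ`-algebra; `exp` itself does not depend on the choice.
  let : NormedAlgebra ℚ A := .restrictScalars ℚ ℝ A
  have hshift : SemiconjBy y (a + s • 1) a := by
    rw [SemiconjBy, mul_add, mul_smul_comm, mul_one, ← h, add_sub_cancel]
  have hexp_shift : exp (a + s • (1 : A)) = Real.exp s • exp a := by
    rw [exp_add_of_commute ((Commute.one_right a).smul_right s), ← Algebra.algebraMap_eq_smul_one,
      ← algebraMap_exp_comm, Real.exp_eq_exp_ℝ, Algebra.algebraMap_eq_smul_one, mul_smul_one]
  have hintertwine : y * (Real.exp s • exp a) = exp a * y := hexp_shift ▸ hshift.exp_right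
  rw [SemiconjBy, ← hintertwine, mul_smul_comm, smul_mul_assoc]

theorem exp_mul_exp_mul_exp_neg_of_mul_sub_mul_eq_smul {a y : A} {s : ℝ}
    (h : a * y - y * a = s • y) :
    exp a * exp y * exp (-a) = exp (Real.exp s • y) := by
  let : NormedAlgebra ℚ A := .restrictScalars ℚ ℝ A
  rw [(semiconjBy_exp_of_mul_sub_mul_eq_smul h).exp_right.eq, mul_assoc,
    ← exp_add_of_commute (Commute.refl a).neg_right, add_neg_cancel, exp_zero, mul_one]

end

/-- In a real Banach algebra, if `XY − YX = c • Y` then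
`exp(tX) exp(Y) exp(−tX) = exp(e^{tc} • Y)` for all `t ∈ ℝ`; in particular for `c < 0`
the conjugates `exp(tX) exp(Y) exp(−tX)` tend to `1` as `t → +∞`. -/
theorem exp_conj_of_commutator_smul
    {A : Type*} [NormedRing A] [NormedAlgebra ℝ A] [CompleteSpace A]
    (X Y : A) (c : ℝ) (h : X * Y - Y * X = c • Y) :
    (∀ t : ℝ,
      NormedSpace.exp (t • X) * NormedSpace.exp Y * NormedSpace.exp (-(t • X))
        = NormedSpace.exp (Real.exp (t * c) • Y)) ∧
    (c < 0 →
      Tendsto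
        (fun t : ℝ =>
          NormedSpace.exp (t • X) * NormedSpace.exp Y * NormedSpace.exp (-(t • X)))
        atTop (nhds 1)) := by
  let : NormedAlgebra ℚ A := .restrictScalars ℚ ℝ A
  have hconj (t : ℝ) :
      exp (t • X) * exp Y * exp (-(t • X)) = exp (Real.exp (t * c) • Y) := by
    apply exp_mul_exp_mul_exp_neg_of_mul_sub_mul_eq_smul
    rw [smul_mul_assoc, mul_smul_comm, ← smul_sub, h, smul_smul]
  refine ⟨hconj, fun hc => ?_⟩
  have hscale : Tendsto (fun t : ℝ => Real.exp (t * c)) atTop (nhds 0) :=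
    Real.tendsto_exp_atBot.comp (tendsto_id.atTop_mul_const_of_neg hc)
  simpa only [hconj, zero_smul, exp_zero] using (hscale.smul_const Y).exp
end

section
/- Let M be a compact metric space and Φ a continuous flow on M. If A ⊆ M is an attractor for Φ, then its dual repellor A* = M ∖ W⁺(A) is a repellor, i.e., A* is an attractor for the time-reversed flow Φ⁻(t,x) := Φ(−t,x). -/
/-! The attractor block `U` is mapped into its own interior, so the sets `Φ t '' closure U` shrink
to `A` as `t → ∞`; by compactness they eventually lie in any neighbourhood of `A`, which places
`closure U` in `W⁺(A)`. Hence `W⁺(A)` is the set of points whose forward orbit meets `U`, an open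
invariant set, and `A* = M ∖ W⁺(A)` is the attractor of the reversed flow with block
`M ∖ closure U`. -/

open Filter

variable {M : Type*} [MetricSpace M] [CompactSpace M]

namespace Flow

variable {α : Type*} [TopologicalSpace α] (Φ : Flow ℝ α)

theorem image_image (s t : ℝ) (S : Set α) : Φ s '' (Φ t '' S) = Φ (s + t) '' S := by
  rw [Set.image_image]
  simp only [Φ.map_add]

theorem image_neg_eq_preimage (t : ℝ) (S : Set α) : Φ (-t) '' S = Φ t ⁻¹' S := by
  rw [Φ.image_eq_preimage_symm, neg_neg]

section AttractorBlock

variable {Φ} {U : Set α} (hU : ∀ t > (0 : ℝ), Φ t '' closure U ⊆ interior U)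
include hU

theorem antitone_image_closure : Antitone fun t => Φ t '' closure U := by
  intro s t hst
  obtain rfl | hst := hst.eq_or_lt
  · rfl
  calc Φ t '' closure U = Φ s '' (Φ (t - s) '' closure U) := by
        rw [image_image, add_sub_cancel]
    _ ⊆ Φ s '' closure U :=
        Set.image_mono <| (hU _ (sub_pos.2 hst)).trans interior_subset_closure

theorem iInter_image_closure_subset :
    ⋂ t, Φ t '' closure U ⊆ ⋂ t ∈ Set.Ici (0 : ℝ), Φ t '' U := by
  refine fun x hx => Set.mem_iInter₂.2 fun t _ => ?_
  have hx : x ∈ Φ t '' (Φ 1 '' closure U) := by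
    rw [image_image]
    exact Set.mem_iInter.1 hx _
  exact Set.image_mono ((hU 1 one_pos).trans interior_subset) hx

theorem exists_image_closure_subset [CompactSpace α] {W : Set α} (hW : IsOpen W)
    (hUW : ⋂ t ∈ Set.Ici (0 : ℝ), Φ t '' U ⊆ W) : ∃ t, Φ t '' closure U ⊆ W := by
  have hclosed : ∀ t, IsClosed (Φ t '' closure U) := fun t =>
    (Φ.toHomeomorph t).isClosedMap _ isClosed_closure
  exact exists_subset_nhds_of_isCompact' (antitone_image_closure hU).directed_ge
    (fun t => (hclosed t).isCompact) hclosed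
    fun x hx => hW.mem_nhds (hUW (iInter_image_closure_subset hU hx))

end AttractorBlock

end Flow

section StableSet

variable {M : Type*} [MetricSpace M] (Φ : Flow ℝ M) {A : Set M}

theorem mem_wPlus_of_eventually_mem {x : M}
    (h : ∀ W, IsOpen W → A ⊆ W → ∀ᶠ t in atTop, Φ t x ∈ W) : x ∈ wPlus Φ A := by
  refine ENNReal.tendsto_nhds_zero.2 fun ε hε => ?_
  have hW : IsOpen {y | Metric.infEDist y A < ε} :=
    isOpen_lt Metric.continuous_infEDist continuous_const
  filter_upwards [h _ hW fun y hy => (Metric.infEDist_zero_of_mem hy).trans_lt hε] with t ht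
  exact ht.le

theorem eventually_mem_of_mem_wPlus (hA : IsCompact A) {W : Set M} (hW : IsOpen W)
    (hAW : A ⊆ W) {x : M} (hx : x ∈ wPlus Φ A) : ∀ᶠ t in atTop, Φ t x ∈ W := by
  obtain ⟨δ, hδ, hsub⟩ := hA.exists_thickening_subset_open hW hAW
  filter_upwards [hx.eventually (gt_mem_nhds (ENNReal.ofReal_pos.2 hδ))] with t ht
  exact hsub (Metric.mem_thickening_iff_infEDist_lt.2 ht)

theorem wPlus_subset_biUnion_preimage (hA : IsCompact A) {V : Set M} (hV : IsOpen V)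
    (hAV : A ⊆ V) : wPlus Φ A ⊆ ⋃ t ∈ Set.Ici (0 : ℝ), Φ t ⁻¹' V := fun _ hx =>
  let ⟨t, htV, ht⟩ := ((eventually_mem_of_mem_wPlus Φ hA hV hAV hx).and
    (eventually_ge_atTop 0)).exists
  Set.mem_iUnion₂.2 ⟨t, ht, htV⟩

theorem preimage_wPlus (s : ℝ) : Φ s ⁻¹' wPlus Φ A = wPlus Φ A := by
  ext x
  have h := tendsto_map'_iff (g := fun t : ℝ => t + s) (x := atTop) (y := nhds 0)
    (f := fun t => Metric.infEDist (Φ t x) A)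
  rw [map_add_atTop_eq] at h
  simp only [Function.comp_def, Φ.map_add] at h
  exact h.symm

section Attractor

variable [CompactSpace M] {Φ} {U : Set M} (hU : ∀ t > (0 : ℝ), Φ t '' closure U ⊆ interior U)
  (hA_eq : A = ⋂ t ∈ Set.Ici (0 : ℝ), Φ t '' U)
include hU hA_eq

theorem closure_subset_wPlus : closure U ⊆ wPlus Φ A := by
  refine fun x hx => mem_wPlus_of_eventually_mem Φ fun W hW hAW => ?_
  obtain ⟨t₀, ht₀⟩ := Flow.exists_image_closure_subset hU hW (hA_eq ▸ hAW)
  filter_upwards [eventually_ge_atTop t₀] with t ht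
  exact ht₀ (Flow.antitone_image_closure hU ht ⟨x, hx, rfl⟩)

theorem biUnion_preimage_closure_subset_wPlus :
    ⋃ t ∈ Set.Ici (0 : ℝ), Φ t ⁻¹' closure U ⊆ wPlus Φ A :=
  Set.iUnion₂_subset fun t _ => by
    rw [← preimage_wPlus Φ t]
    exact Set.preimage_mono (closure_subset_wPlus hU hA_eq)

variable (hA : IsCompact A) (hAU : A ⊆ interior U)
include hA hAU

theorem wPlus_eq_biUnion_preimage_closure :
    wPlus Φ A = ⋃ t ∈ Set.Ici (0 : ℝ), Φ t ⁻¹' closure U :=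
  ((wPlus_subset_biUnion_preimage Φ hA isOpen_interior hAU).trans
    (Set.biUnion_mono subset_rfl fun _ _ => Set.preimage_mono interior_subset_closure)).antisymm
    (biUnion_preimage_closure_subset_wPlus hU hA_eq)

theorem wPlus_eq_biUnion_preimage_interior :
    wPlus Φ A = ⋃ t ∈ Set.Ici (0 : ℝ), Φ t ⁻¹' interior U :=
  (wPlus_subset_biUnion_preimage Φ hA isOpen_interior hAU).antisymm
    ((Set.biUnion_mono subset_rfl fun _ _ => Set.preimage_mono interior_subset_closure).trans
      (biUnion_preimage_closure_subset_wPlus hU hA_eq))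

theorem isOpen_wPlus : IsOpen (wPlus Φ A) := by
  rw [wPlus_eq_biUnion_preimage_interior hU hA_eq hA hAU]
  exact isOpen_biUnion fun t _ => isOpen_interior.preimage (Φ.continuous_toFun t)

end Attractor

end StableSet

/-- If `A` is an attractor for a continuous flow `Φ` on a compact
metric space, then its dual repellor `A* = M ∖ W⁺(A)` is a repellor, i.e. an attractor
for the time-reversed flow `Φ⁻(t,x) = Φ(−t,x)`. -/
theorem dualRepellor_isRepellor
    {M : Type*} [MetricSpace M] [CompactSpace M] (Φ : Flow ℝ M)
    (A : Set M) (hA : IsAttractor (fun t x => Φ t x) A) :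
    IsAttractor (fun (t : ℝ) (x : M) => Φ (-t) x) (Set.univ \ wPlus Φ A) := by
  obtain ⟨hA, -, U, hAU, hU, hA_eq⟩ := hA
  refine ⟨(isClosed_univ.sdiff (isOpen_wPlus hU hA_eq hA hAU)).isCompact, fun t => ?_,
    (closure U)ᶜ, ?_, fun t ht => ?_, ?_⟩
  · rw [Φ.image_neg_eq_preimage, Set.preimage_sdiff, Set.preimage_univ, preimage_wPlus]
  · rw [interior_compl, closure_closure]
    exact fun x hx hxU => hx.2 (closure_subset_wPlus hU hA_eq hxU)
  · rw [Φ.image_neg_eq_preimage, closure_compl, interior_compl, closure_closure]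
    exact fun x hx hxU => hx (interior_mono subset_closure (hU t ht ⟨x, hxU, rfl⟩))
  · rw [← Set.compl_eq_univ_sdiff, wPlus_eq_biUnion_preimage_closure hU hA_eq hA hAU,
      Set.compl_iUnion₂]
    simp only [Φ.image_neg_eq_preimage, Set.preimage_compl]
end
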